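/- arXiv:1611.08836 — 4 statements merged into one kernel-verified Lean document; each statement's English description precedes it below -/
import Mathlib

section
/- Let v_1, ..., v_k be unit vectors in ℝ^m (indexed cyclically) such that every m cyclically consecutive vectors are linearly independent, with k ≥ m. Define u_i to be a unit vector orthogonal to the m-1 vectors v_{i+1}, ..., v_{i+m-1}. If for each i the dot products u_i · v_i and u_i · v_{i+m} are nonzero, then every m cyclically consecutive vectors among the u_i are linearly independent. -/
/-!
Pair the `u_{i+j}` (`0 ≤ j < m`) with the `v_{i+m+s}` (`0 ≤ s < m`). Since `u_{i+j}` is orthogonal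
to `v_{i+j+1}, …, v_{i+j+m-1}`, the pairing matrix `⟪v_{i+m+s}, u_{i+j}⟫` vanishes for `s < j`, and its
diagonal entries `⟪u_{i+s}, v_{i+s+m}⟫` are nonzero. A triangular matrix with nonzero diagonal is
invertible, so no nontrivial combination of the `u_{i+j}` can vanish.
-/

open RealInnerProductSpace

theorem linearIndependent_of_dual_lowerTriangular {K V ι : Type*} [Field K] [AddCommGroup V]
    [Module K V] [Fintype ι] [LinearOrder ι] (x : ι → V) (f : ι → Module.Dual K V)
    (hlow : ∀ s j, s < j → f s (x j) = 0) (hdiag : ∀ s, f s (x s) ≠ 0) :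
    LinearIndependent K x := by
  classical
  let A : Matrix ι ι K := Matrix.of fun s j => f s (x j)
  have hdet : A.det ≠ 0 := by
    rw [Matrix.det_of_isLowerTriangular A fun s j hjs => hlow s j hjs]
    exact Finset.prod_ne_zero_iff.mpr fun s _ => hdiag s
  refine Fintype.linearIndependent_iff.mpr fun g hg =>
    congrFun (Matrix.eq_zero_of_mulVec_eq_zero hdet ?_)
  ext s
  simpa [A, Matrix.mulVec, dotProduct, mul_comm] using congrArg (f s) hg

theorem stmt_3_general (m k : ℕ)
    (v u : ZMod k → EuclideanSpace ℝ (Fin m))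
    (horth : ∀ i : ZMod k, ∀ j : Fin (m - 1), ⟪u i, v (i + 1 + (j : ℕ))⟫ = 0)
    (h2 : ∀ i : ZMod k, ⟪u i, v (i + (m : ℕ))⟫ ≠ 0) :
    ∀ i : ZMod k, LinearIndependent ℝ (fun j : Fin m => u (i + (j : ℕ))) := by
  intro i
  refine linearIndependent_of_dual_lowerTriangular _ (fun s : Fin m => innerₛₗ ℝ (v (i + m + s)))
    (fun s j hsj => ?_) (fun s => ?_)
  · obtain ⟨t, ht⟩ : ∃ t : Fin (m - 1), (j : ℕ) + 1 + (t : ℕ) = m + (s : ℕ) :=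
      ⟨⟨m + s - j - 1, by omega⟩, by simp only; omega⟩
    have hidx : i + (j : ℕ) + 1 + (t : ℕ) = i + m + s := by
      have hcast := congrArg (Nat.cast : ℕ → ZMod k) ht
      push_cast at hcast
      linear_combination hcast
    simpa [hidx, real_inner_comm] using horth (i + j) t
  · simpa [add_right_comm, real_inner_comm] using h2 (i + s)

/-- The dual of a generic spherical polygon is generic: if every `m` cyclically consecutive
vectors `v_i` are linearly independent, the `u_i` are unit vectors orthogonal to
`v_{i+1}, …, v_{i+m-1}`, and `u_i · v_i ≠ 0`, `u_i · v_{i+m} ≠ 0`, then every `m`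
cyclically consecutive vectors `u_i` are linearly independent. -/
theorem stmt_3 (m k : ℕ) (hm : 2 ≤ m) (hk : m ≤ k)
    (v u : ZMod k → EuclideanSpace ℝ (Fin m))
    (hv : ∀ i, ‖v i‖ = 1) (hu : ∀ i, ‖u i‖ = 1)
    (hvind : ∀ i : ZMod k, LinearIndependent ℝ (fun j : Fin m => v (i + (j : ℕ))))
    (horth : ∀ i : ZMod k, ∀ j : Fin (m - 1), ⟪u i, v (i + 1 + (j : ℕ))⟫ = 0)
    (h1 : ∀ i : ZMod k, ⟪u i, v i⟫ ≠ 0)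
    (h2 : ∀ i : ZMod k, ⟪u i, v (i + (m : ℕ))⟫ ≠ 0) :
    ∀ i : ZMod k, LinearIndependent ℝ (fun j : Fin m => u (i + (j : ℕ))) :=
  stmt_3_general m k v u horth h2
end

section
/- Let V be a finite-dimensional real vector space with symplectic form ω, and let L: V → V satisfy ω(Lx, y) = ω(x, Ly) for all x, y. Then the characteristic polynomial of L is the square of a polynomial; in particular, every eigenvalue of L has even algebraic multiplicity. -/
/-!
Choose a basis, so that `ω` has a skew-symmetric Gram matrix `G` and `L` a matrix `A` with
`Aᵀ G = G A`. Then `G (X - A)` is a skew-symmetric matrix over `ℝ[X]`, and the determinant of a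
skew-symmetric matrix over a field of characteristic `≠ 2` is a square (split off hyperbolic
planes). Hence `det G · χ_L` and `det G ≠ 0` are squares in `ℝ(X)`, so `χ_L` is a square in
`ℝ(X)`, and, `ℝ[X]` being integrally closed, already in `ℝ[X]`.
-/

open Matrix Module Polynomial

namespace LinearMap.BilinForm

variable {K V : Type*} [Field K] [AddCommGroup V] [Module K V]
  {ι ι' : Type*} [Fintype ι] [DecidableEq ι] [Fintype ι'] [DecidableEq ι']

lemma toMatrix_reindex (B : LinearMap.BilinForm K V) (b : Basis ι K V) (e : ι ≃ ι') :
    toMatrix (b.reindex e) B = (toMatrix b B).submatrix e.symm e.symm := by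
  ext i j
  simp [toMatrix_apply]

lemma isSquare_det_toMatrix_of_basis (B : LinearMap.BilinForm K V) (b : Basis ι K V)
    (b' : Basis ι' K V) (h : IsSquare (toMatrix b B).det) : IsSquare (toMatrix b' B).det := by
  set c := b'.reindex (b'.indexEquiv b)
  have hc : (toMatrix c B).det = (toMatrix b' B).det := by
    rw [toMatrix_reindex, det_submatrix_equiv_self]
  obtain ⟨r, hr⟩ := h
  rw [← hc, ← toMatrix_mul_basis_toMatrix b c, det_mul, det_mul, det_transpose, hr]
  exact ⟨(b.toMatrix c).det * r, by ring⟩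

lemma isSquare_det_toMatrix_of_isCompl_orthogonal {B : LinearMap.BilinForm K V} (hB : B.IsRefl)
    {W : Submodule K V} (hW : IsCompl W (B.orthogonal W))
    {κ κ' : Type*} [Fintype κ] [DecidableEq κ] [Fintype κ'] [DecidableEq κ']
    (bW : Basis κ K W) (bO : Basis κ' K (B.orthogonal W)) (b : Basis ι K V)
    (hsqW : IsSquare (toMatrix bW (B.restrict W)).det)
    (hsqO : IsSquare (toMatrix bO (B.restrict (B.orthogonal W))).det) :
    IsSquare (toMatrix b B).det := by
  let bV := (bW.prod bO).map (Submodule.prodEquivOfIsCompl W _ hW)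
  have hbV : toMatrix bV B = fromBlocks (toMatrix bW (B.restrict W)) 0 0
      (toMatrix bO (B.restrict (B.orthogonal W))) := by
    have horth (i : κ) (j : κ') : B (bW i) (bO j) = 0 :=
      mem_orthogonal_iff.1 (bO j).2 _ (bW i).2
    ext (i | i) (j | j) <;>
      simp [bV, toMatrix_apply, Submodule.coe_prodEquivOfIsCompl', horth, hB _ _ (horth _ _)]
  apply isSquare_det_toMatrix_of_basis B bV
  rw [hbV, det_fromBlocks_zero₂₁]
  exact hsqW.mul hsqO

variable {B : LinearMap.BilinForm K V} {x y : V}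

lemma linearIndependent_pair_of_isAlt (hB : B.IsAlt) (hxy : B x y ≠ 0) :
    LinearIndependent K ![x, y] := by
  rw [LinearIndependent.pair_iff]
  intro s t hst
  have hs : s * B x y = 0 := by
    simpa [hB y] using congrArg (fun v => B v y) hst
  obtain rfl : s = 0 := (mul_eq_zero.1 hs).resolve_right hxy
  have hy : y ≠ 0 := by rintro rfl; simp at hxy
  simpa [hy] using hst

lemma det_toMatrix_restrict_span_pair (hB : B.IsAlt) (hxy : B x y ≠ 0) :
    (toMatrix (Basis.span (linearIndependent_pair_of_isAlt hB hxy))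
      (B.restrict (Submodule.span K (Set.range ![x, y])))).det = B x y * B x y := by
  rw [det_fin_two]
  simp [toMatrix_apply, hB x, hB y, ← LinearMap.IsAlt.neg hB x y]

theorem isSquare_det_toMatrix_of_isAlt [FiniteDimensional K V] (hB : B.IsAlt) (b : Basis ι K V) :
    IsSquare (toMatrix b B).det := by
  suffices ∀ b' : Basis (Fin (finrank K V)) K V, IsSquare (toMatrix b' B).det from
    isSquare_det_toMatrix_of_basis B _ b (this (finBasis K V))
  clear b
  induction hn : finrank K V using Nat.strong_induction_on generalizing V with
  | _ n ih =>
  by_cases h : ∀ x y, B x y = 0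
  · intro b
    obtain rfl : B = 0 := ext h
    rcases isEmpty_or_nonempty (Fin n) with _ | _ <;> simp
  push Not at h
  obtain ⟨x, y, hxy⟩ := h
  intro b
  set W := Submodule.span K (Set.range ![x, y])
  have hli := linearIndependent_pair_of_isAlt hB hxy
  have hdetW := det_toMatrix_restrict_span_pair hB hxy
  have hW : IsCompl W (B.orthogonal W) :=
    isCompl_orthogonal_of_restrict_nondegenerate hB.isRefl
      ((nondegenerate_iff_det_ne_zero (Basis.span hli)).2 (hdetW ▸ mul_ne_zero hxy hxy))
  have hlt : finrank K (B.orthogonal W) < n := by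
    have := Submodule.finrank_add_eq_of_isCompl hW
    rw [finrank_span_eq_card hli, Fintype.card_fin] at this
    omega
  have hO : (B.restrict (B.orthogonal W)).IsAlt := fun z => hB z
  exact isSquare_det_toMatrix_of_isCompl_orthogonal hB.isRefl hW (Basis.span hli)
    (finBasis K _) b ⟨_, hdetW⟩ (ih _ hlt hO rfl (finBasis K _))

end LinearMap.BilinForm

theorem IsIntegrallyClosed.isSquare_of_isSquare_algebraMap {R K : Type*} [CommRing R] [IsDomain R]
    [IsIntegrallyClosed R] [Field K] [Algebra R K] [IsFractionRing R K] {a : R}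
    (h : IsSquare (algebraMap R K a)) : IsSquare a := by
  obtain ⟨q, hq⟩ := h
  obtain ⟨r, rfl⟩ := exists_algebraMap_eq_of_isIntegral_pow (x := q) two_pos
    (by rw [sq, ← hq]; exact isIntegral_algebraMap)
  exact ⟨r, IsFractionRing.injective R K (by rw [hq, map_mul])⟩

namespace Matrix

variable {n : Type*} [Fintype n] [DecidableEq n]

theorem isSquare_det_of_transpose_eq_neg {K : Type*} [Field K] [NeZero (2 : K)]
    {M : Matrix n n K} (hM : Mᵀ = -M) : IsSquare M.det := by
  have hB : (toBilin' M).IsAlt := by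
    intro v
    have h : v ⬝ᵥ M *ᵥ v = -(v ⬝ᵥ M *ᵥ v) := by
      conv_lhs => rw [dotProduct_mulVec, dotProduct_comm, ← mulVec_transpose, hM]
      rw [neg_mulVec, dotProduct_neg]
    rw [eq_neg_iff_add_eq_zero, ← two_mul] at h
    rw [toBilin'_apply']
    exact (mul_eq_zero.1 h).resolve_left two_ne_zero
  simpa [LinearMap.BilinForm.toMatrix_basisFun] using
    LinearMap.BilinForm.isSquare_det_toMatrix_of_isAlt hB (Pi.basisFun K n)

lemma charmatrix_transpose_mul_map_C {R : Type*} [CommRing R] {G A : Matrix n n R}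
    (hGA : Aᵀ * G = G * A) : charmatrix Aᵀ * G.map C = G.map C * charmatrix A := by
  simp only [charmatrix, RingHom.mapMatrix_apply, sub_mul, mul_sub, ← Matrix.map_mul, hGA,
    (scalar_commute (X : R[X]) (Commute.all X) _).eq]

lemma transpose_map_C_mul_charmatrix {R : Type*} [CommRing R] {G A : Matrix n n R}
    (hG : Gᵀ = -G) (hGA : Aᵀ * G = G * A) :
    (G.map C * charmatrix A)ᵀ = -(G.map C * charmatrix A) := by
  rw [transpose_mul, ← charmatrix_transpose, ← transpose_map, hG, Matrix.map_neg _ (map_neg C),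
    mul_neg, charmatrix_transpose_mul_map_C hGA]

theorem isSquare_charpoly_of_isSelfAdjoint {F : Type*} [Field F] [NeZero (2 : F)]
    {G A : Matrix n n F} (hG : Gᵀ = -G) (hdet : G.det ≠ 0) (hGA : G.IsSelfAdjoint A) :
    IsSquare A.charpoly := by
  set φ := algebraMap F[X] (FractionRing F[X])
  have hφC : Function.Injective (φ.comp C) :=
    (IsFractionRing.injective F[X] _).comp C_injective
  have : NeZero (2 : FractionRing F[X]) := by
    have h2 := (map_ne_zero_iff _ hφC).2 (two_ne_zero : (2 : F) ≠ 0)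
    rw [map_ofNat] at h2
    exact ⟨h2⟩
  have hM : IsSquare (φ (C G.det * A.charpoly)) := by
    rw [charpoly, RingHom.map_det, RingHom.mapMatrix_apply, ← det_mul, RingHom.map_det]
    refine isSquare_det_of_transpose_eq_neg ?_
    rw [RingHom.mapMatrix_apply, ← transpose_map, transpose_map_C_mul_charmatrix hG hGA,
      Matrix.map_neg _ (map_neg φ)]
  have hc : φ (C G.det) ≠ 0 := (map_ne_zero_iff _ hφC).2 hdet
  refine IsIntegrallyClosed.isSquare_of_isSquare_algebraMap (K := FractionRing F[X]) ?_
  rw [← mul_div_cancel_left₀ (φ A.charpoly) hc, ← map_mul]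
  exact hM.div ((isSquare_det_of_transpose_eq_neg hG).map (φ.comp C))

end Matrix

theorem LinearMap.isSquare_charpoly_of_isSelfAdjoint {F V : Type*} [Field F] [NeZero (2 : F)]
    [AddCommGroup V] [Module F V] [FiniteDimensional F V] {ω : LinearMap.BilinForm F V}
    (hω : ω.IsAlt) (hnd : ω.Nondegenerate) {L : V →ₗ[F] V} (hL : ω.IsSelfAdjoint L) :
    IsSquare L.charpoly := by
  let b := finBasis F V
  set G := BilinForm.toMatrix b ω
  have hG : Gᵀ = -G := by
    ext i j
    simp only [G, transpose_apply, Matrix.neg_apply, BilinForm.toMatrix_apply]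
    exact (LinearMap.IsAlt.neg hω (b i) (b j)).symm
  have hGA : G.IsSelfAdjoint (toMatrix b b L) := by
    rw [Matrix.IsSelfAdjoint, Matrix.IsAdjointPair, ← BilinForm.toMatrix_compLeft,
      ← BilinForm.toMatrix_compRight]
    exact congrArg _ (BilinForm.ext hL)
  rw [← charpoly_toMatrix L b]
  exact Matrix.isSquare_charpoly_of_isSelfAdjoint hG
    ((BilinForm.nondegenerate_iff_det_ne_zero b).1 hnd) hGA

/-- The characteristic polynomial of a skew-Hamiltonian linear map is the square of a
polynomial; in particular every eigenvalue has even algebraic multiplicity. -/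
theorem stmt_9 (V : Type*) [AddCommGroup V] [Module ℝ V] [FiniteDimensional ℝ V]
    (ω : V →ₗ[ℝ] V →ₗ[ℝ] ℝ) (halt : ∀ x, ω x x = 0)
    (hnd : ∀ x, (∀ y, ω x y = 0) → x = 0)
    (L : V →ₗ[ℝ] V) (hL : ∀ x y, ω (L x) y = ω x (L y)) :
    ∃ p : Polynomial ℝ, LinearMap.charpoly L = p ^ 2 ∧
      ∀ μ : ℝ, Even (Polynomial.rootMultiplicity μ (LinearMap.charpoly L)) := by
  obtain ⟨p, hp⟩ := LinearMap.isSquare_charpoly_of_isSelfAdjoint halt (.ofSeparatingLeft hnd) hL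
  have hp0 : p * p ≠ 0 := hp ▸ (LinearMap.charpoly_monic L).ne_zero
  refine ⟨p, by rw [hp, sq], fun μ => ?_⟩
  rw [hp, rootMultiplicity_mul hp0]
  exact ⟨_, rfl⟩
end

section
/- Let ρ: ℝ → ℝ be a continuous 2πr-periodic function (0 < r < 1) such that ∫₀^{2πr} ρ(t) cos(t/r) dt = ∫₀^{2πr} ρ(t) sin(t/r) dt = ∫₀^{2πr} ρ(t) dt = 0, and ρ not identically zero. Then ρ has at least four zeros in [0, 2πr). -/
open Real

/-!
If `ρ` is orthogonal to `1`, `cos (t / r)` and `sin (t / r)` over a period `T = 2πr`, it is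
orthogonal to every `sin ((t - A) / 2r) * sin ((t - B) / 2r)`, a combination of those three
functions that changes sign on `[A, A + T]` exactly at `B`. If `ρ` had at most three zeros per
period, its sign pattern around the circle would consist of at most three arcs; two adjacent arcs
of equal sign can be merged, so `ρ` is `≥ 0` on some `[A, B]` and `≤ 0` on `[B, A + T]` (up to
replacing `ρ` by `-ρ`). Then `ρ` times the test function has a constant sign and zero integral,
which forces `ρ = 0`.
-/

open Set Function

theorem forall_mem_Icc_of_forall_mem_Icc {α : Type*} [LinearOrder α] {p : α → Prop} {a b c : α}
    (hab : a ≤ b) (hbc : b ≤ c) (h₁ : ∀ t ∈ Icc a b, p t) (h₂ : ∀ t ∈ Icc b c, p t) :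
    ∀ t ∈ Icc a c, p t := by
  rw [← Icc_union_Icc_eq_Icc hab hbc]
  rintro t (ht | ht)
  exacts [h₁ t ht, h₂ t ht]

theorem toIcoMod_injOn {α : Type*} [AddCommGroup α] [LinearOrder α] [IsOrderedAddMonoid α]
    [Archimedean α] {p : α} (hp : 0 < p) (a b : α) : InjOn (toIcoMod hp a) (Ico b (b + p)) :=
  fun x hx y hy h => by
    rw [← (toIcoMod_eq_self hp).2 hx, ← (toIcoMod_eq_self hp).2 hy, ← toIcoMod_toIcoMod hp b a x,
      h, toIcoMod_toIcoMod]

theorem exists_zero_of_intervalIntegral_eq_zero {f : ℝ → ℝ} {a b : ℝ} (hab : a ≠ b)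
    (hf : ContinuousOn f (uIcc a b)) (h : ∫ x in a..b, f x = 0) : ∃ c ∈ uIoo a b, f c = 0 := by
  obtain ⟨c, hc, hfc⟩ := exists_eq_interval_average hab hf
  exact ⟨c, hc, by rw [hfc, interval_average_eq_div, h, zero_div]⟩

theorem eq_zero_of_nonpos_of_intervalIntegral_eq_zero {f : ℝ → ℝ} {a b : ℝ} (hab : a < b)
    (hf : ContinuousOn f (Icc a b)) (hle : ∀ t ∈ Icc a b, f t ≤ 0) (h : ∫ x in a..b, f x = 0) :
    ∀ t ∈ Icc a b, f t = 0 := by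
  by_contra! ⟨c, hc, hfc⟩
  have hlt : ∫ x in a..b, f x < ∫ _ in a..b, (0 : ℝ) :=
    intervalIntegral.integral_lt_integral_of_continuousOn_of_le_of_exists_lt hab hf
      continuousOn_const (fun t ht => hle t (Ioc_subset_Icc_self ht))
      ⟨c, hc, (hle c hc).lt_of_ne hfc⟩
  simp [h] at hlt

theorem nonneg_or_nonpos_of_forall_ne_zero {f : ℝ → ℝ} {u v : ℝ} (hf : ContinuousOn f (Icc u v))
    (h : ∀ t ∈ Ioo u v, f t ≠ 0) : (∀ t ∈ Icc u v, 0 ≤ f t) ∨ ∀ t ∈ Icc u v, f t ≤ 0 := by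
  by_contra! ⟨⟨x, hx, hfx⟩, ⟨y, hy, hfy⟩⟩
  have hzero : (0 : ℝ) ∈ Ioo (f x) (f y) := ⟨hfx, hfy⟩
  rcases le_total x y with hxy | hyx
  · obtain ⟨w, hw, hw0⟩ :=
      intermediate_value_Ioo hxy (hf.mono (Icc_subset_Icc hx.1 hy.2)) hzero
    exact h w ⟨hx.1.trans_lt hw.1, hw.2.trans_le hy.2⟩ hw0
  · obtain ⟨w, hw, hw0⟩ :=
      intermediate_value_Ioo' hyx (hf.mono (Icc_subset_Icc hy.1 hx.2)) hzero
    exact h w ⟨hy.1.trans_lt hw.1, hw.2.trans_le hx.2⟩ hw0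

theorem sin_sub_mul_sin_sub (x α β : ℝ) :
    sin (x - α) * sin (x - β) =
      cos (β - α) / 2 - cos (α + β) / 2 * cos (2 * x) - sin (α + β) / 2 * sin (2 * x) := by
  simp only [sin_sub, cos_sub, cos_add, sin_add, cos_two_mul, sin_two_mul]
  linear_combination (cos α * cos β) * sin_sq_add_cos_sq x

section Trigonometry

variable {x α β : ℝ}

theorem sin_sub_mul_sin_sub_nonpos (hαx : α ≤ x) (hxβ : x ≤ β) (hβα : β ≤ α + π) :
    sin (x - α) * sin (x - β) ≤ 0 :=
  mul_nonpos_of_nonneg_of_nonpos (sin_nonneg_of_nonneg_of_le_pi (by linarith) (by linarith))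
    (sin_nonpos_of_nonpos_of_neg_pi_le (by linarith) (by linarith))

theorem sin_sub_mul_sin_sub_nonneg (hαβ : α ≤ β) (hβx : β ≤ x) (hxα : x ≤ α + π) :
    0 ≤ sin (x - α) * sin (x - β) :=
  mul_nonneg (sin_nonneg_of_nonneg_of_le_pi (by linarith) (by linarith))
    (sin_nonneg_of_nonneg_of_le_pi (by linarith) (by linarith))

theorem sin_sub_mul_sin_sub_ne_zero (hαβ : α ≤ β) (hβα : β ≤ α + π) (hαx : α < x)
    (hxα : x < α + π) (hxβ : x ≠ β) : sin (x - α) * sin (x - β) ≠ 0 :=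
  mul_ne_zero (sin_pos_of_pos_of_lt_pi (by linarith) (by linarith)).ne'
    (mt (sin_eq_zero_iff_of_lt_of_lt (by linarith) (by linarith)).1 (sub_ne_zero.2 hxβ))

end Trigonometry

def OrthogonalToFirstHarmonics (r : ℝ) (ρ : ℝ → ℝ) : Prop :=
  (∫ t in (0:ℝ)..(2 * π * r), ρ t = 0) ∧ (∫ t in (0:ℝ)..(2 * π * r), ρ t * cos (t / r) = 0) ∧
    ∫ t in (0:ℝ)..(2 * π * r), ρ t * sin (t / r) = 0

theorem OrthogonalToFirstHarmonics.neg {r : ℝ} {ρ : ℝ → ℝ} (h : OrthogonalToFirstHarmonics r ρ) :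
    OrthogonalToFirstHarmonics r (-ρ) := by
  obtain ⟨h0, hc, hs⟩ := h
  refine ⟨?_, ?_, ?_⟩ <;> simp [intervalIntegral.integral_neg, *]

theorem OrthogonalToFirstHarmonics.integral_mul_eq_zero {r : ℝ} {ρ : ℝ → ℝ} (hr : 0 < r)
    (hcont : Continuous ρ) (hper : Periodic ρ (2 * π * r)) (h : OrthogonalToFirstHarmonics r ρ)
    (a c₀ c₁ c₂ : ℝ) :
    ∫ t in a..a + 2 * π * r, ρ t * (c₀ + c₁ * cos (t / r) + c₂ * sin (t / r)) = 0 := by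
  obtain ⟨h0, hc, hs⟩ := h
  have hshift : ∀ t, (t + 2 * π * r) / r = t / r + 2 * π := fun t => by field_simp
  have hper' : Periodic (fun t => ρ t * (c₀ + c₁ * cos (t / r) + c₂ * sin (t / r))) (2 * π * r) :=
    fun t => by simp only [hper t, hshift, cos_add_two_pi, sin_add_two_pi]
  have hintegrable : ∀ f : ℝ → ℝ, Continuous f →
      IntervalIntegrable f MeasureTheory.volume 0 (2 * π * r) :=
    fun f hf => hf.intervalIntegrable _ _
  rw [hper'.intervalIntegral_add_eq a 0, zero_add]
  have hexpand : ∀ t, ρ t * (c₀ + c₁ * cos (t / r) + c₂ * sin (t / r)) =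
      c₀ * ρ t + c₁ * (ρ t * cos (t / r)) + c₂ * (ρ t * sin (t / r)) := fun t => by ring
  simp only [hexpand]
  rw [intervalIntegral.integral_add (hintegrable _ (by fun_prop)) (hintegrable _ (by fun_prop)),
    intervalIntegral.integral_add (hintegrable _ (by fun_prop)) (hintegrable _ (by fun_prop)),
    intervalIntegral.integral_const_mul, intervalIntegral.integral_const_mul,
    intervalIntegral.integral_const_mul, h0, hc, hs]
  ring

theorem OrthogonalToFirstHarmonics.integral_mul_sin_sub_mul_sin_sub_eq_zero {r : ℝ}
    {ρ : ℝ → ℝ} (hr : 0 < r) (hcont : Continuous ρ) (hper : Periodic ρ (2 * π * r))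
    (h : OrthogonalToFirstHarmonics r ρ) (A B : ℝ) :
    ∫ t in A..A + 2 * π * r,
      ρ t * (sin (t / (2 * r) - A / (2 * r)) * sin (t / (2 * r) - B / (2 * r))) = 0 := by
  set α := A / (2 * r)
  set β := B / (2 * r)
  refine (intervalIntegral.integral_congr fun t _ => ?_).trans
    (h.integral_mul_eq_zero hr hcont hper A (cos (β - α) / 2) (-(cos (α + β) / 2))
      (-(sin (α + β) / 2)))
  rw [sin_sub_mul_sin_sub, show 2 * (t / (2 * r)) = t / r by field_simp]
  ring

def SignSplitAt (ρ : ℝ → ℝ) (T A B : ℝ) : Prop :=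
  A ≤ B ∧ B ≤ A + T ∧ (∀ t ∈ Icc A B, 0 ≤ ρ t) ∧ ∀ t ∈ Icc B (A + T), ρ t ≤ 0

theorem eq_zero_of_signSplitAt {r : ℝ} {ρ : ℝ → ℝ} {A B : ℝ} (hr : 0 < r) (hcont : Continuous ρ)
    (hper : Periodic ρ (2 * π * r)) (horth : OrthogonalToFirstHarmonics r ρ)
    (hsplit : SignSplitAt ρ (2 * π * r) A B) (t : ℝ) : ρ t = 0 := by
  obtain ⟨hAB, hBA, hpos, hneg⟩ := hsplit
  have hT : 0 < 2 * π * r := by positivity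
  have h2r : 0 < 2 * r := by positivity
  set θ : ℝ → ℝ := fun t => t / (2 * r)
  have hθπ : θ (A + 2 * π * r) = θ A + π := by
    simp only [θ]
    field_simp
  have hθle : ∀ {s t}, θ s ≤ θ t ↔ s ≤ t := div_le_div_iff_of_pos_right h2r
  have hθlt : ∀ {s t}, θ s < θ t ↔ s < t := div_lt_div_iff_of_pos_right h2r
  have hαβ : θ A ≤ θ B := hθle.2 hAB
  have hβα : θ B ≤ θ A + π := hθπ ▸ hθle.2 hBA
  set g : ℝ → ℝ := fun t => sin (θ t - θ A) * sin (θ t - θ B)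
  have hint : ∫ t in A..A + 2 * π * r, ρ t * g t = 0 :=
    horth.integral_mul_sin_sub_mul_sin_sub_eq_zero hr hcont hper A B
  have hle : ∀ t ∈ Icc A (A + 2 * π * r), ρ t * g t ≤ 0 := by
    rintro t ⟨hAt, htA⟩
    rcases le_total t B with htB | hBt
    · exact mul_nonpos_of_nonneg_of_nonpos (hpos t ⟨hAt, htB⟩)
        (sin_sub_mul_sin_sub_nonpos (hθle.2 hAt) (hθle.2 htB) hβα)
    · exact mul_nonpos_of_nonpos_of_nonneg (hneg t ⟨hBt, htA⟩)
        (sin_sub_mul_sin_sub_nonneg hαβ (hθle.2 hBt) (hθπ ▸ hθle.2 htA))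
  have hρg := eq_zero_of_nonpos_of_intervalIntegral_eq_zero (by linarith)
    (by fun_prop) hle hint
  have hρA : ρ A = 0 := le_antisymm (hper A ▸ hneg _ ⟨hBA, le_rfl⟩) (hpos A ⟨le_rfl, hAB⟩)
  have hρB : ρ B = 0 := le_antisymm (hneg B ⟨le_rfl, hBA⟩) (hpos B ⟨hAB, le_rfl⟩)
  have hIco : ∀ s ∈ Ico A (A + 2 * π * r), ρ s = 0 := by
    intro s hs
    rcases eq_or_ne s A with rfl | hsA
    · exact hρA
    rcases eq_or_ne s B with rfl | hsB
    · exact hρB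
    refine (mul_eq_zero.1 (hρg s (Ico_subset_Icc_self hs))).resolve_right ?_
    exact sin_sub_mul_sin_sub_ne_zero hαβ hβα (hθlt.2 (lt_of_le_of_ne hs.1 hsA.symm))
      (hθπ ▸ hθlt.2 hs.2) (fun h => hsB ((div_left_inj' h2r.ne').1 h))
  obtain ⟨y, hy, hty⟩ := hper.exists_mem_Ico hT t A
  rw [hty]
  exact hIco y hy

def HasFourZerosWithin (ρ : ℝ → ℝ) (T : ℝ) : Prop :=
  ∃ z₁ z₂ z₃ z₄, z₁ < z₂ ∧ z₂ < z₃ ∧ z₃ < z₄ ∧ z₄ < z₁ + T ∧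
    ρ z₁ = 0 ∧ ρ z₂ = 0 ∧ ρ z₃ = 0 ∧ ρ z₄ = 0

theorem HasFourZerosWithin.exists_mem_Ico {ρ : ℝ → ℝ} {T : ℝ} (hT : 0 < T) (hper : Periodic ρ T)
    (h : HasFourZerosWithin ρ T) :
    ∃ a b c d : ℝ, a ∈ Ico 0 T ∧ b ∈ Ico 0 T ∧ c ∈ Ico 0 T ∧ d ∈ Ico 0 T ∧
      a ≠ b ∧ a ≠ c ∧ a ≠ d ∧ b ≠ c ∧ b ≠ d ∧ c ≠ d ∧
      ρ a = 0 ∧ ρ b = 0 ∧ ρ c = 0 ∧ ρ d = 0 := by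
  obtain ⟨z₁, z₂, z₃, z₄, h₁₂, h₂₃, h₃₄, h₄₁, e₁, e₂, e₃, e₄⟩ := h
  have hinj := toIcoMod_injOn hT 0 z₁
  have m₁ : z₁ ∈ Ico z₁ (z₁ + T) := ⟨le_rfl, by linarith⟩
  have m₂ : z₂ ∈ Ico z₁ (z₁ + T) := ⟨h₁₂.le, by linarith⟩
  have m₃ : z₃ ∈ Ico z₁ (z₁ + T) := ⟨by linarith, by linarith⟩
  have m₄ : z₄ ∈ Ico z₁ (z₁ + T) := ⟨by linarith, h₄₁⟩
  have hzero : ∀ z, ρ z = 0 → ρ (toIcoMod hT 0 z) = 0 := fun z hz => by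
    rw [← self_sub_toIcoDiv_zsmul, hper.sub_zsmul_eq, hz]
  exact ⟨_, _, _, _, toIcoMod_mem_Ico' hT z₁, toIcoMod_mem_Ico' hT z₂, toIcoMod_mem_Ico' hT z₃,
    toIcoMod_mem_Ico' hT z₄, hinj.ne m₁ m₂ h₁₂.ne, hinj.ne m₁ m₃ (by linarith),
    hinj.ne m₁ m₄ (by linarith), hinj.ne m₂ m₃ h₂₃.ne, hinj.ne m₂ m₄ (by linarith),
    hinj.ne m₃ m₄ h₃₄.ne, hzero _ e₁, hzero _ e₂, hzero _ e₃, hzero _ e₄⟩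

theorem exists_zeroFree_pieces {ρ : ℝ → ℝ} {T a : ℝ} (hT : 0 ≤ T) (ha : ρ a = 0)
    (h4 : ¬HasFourZerosWithin ρ T) :
    ∃ b c, a ≤ b ∧ b ≤ c ∧ c ≤ a + T ∧ (∀ t ∈ Ioo a b, ρ t ≠ 0) ∧ (∀ t ∈ Ioo b c, ρ t ≠ 0) ∧
      ∀ t ∈ Ioo c (a + T), ρ t ≠ 0 := by
  have hempty : ∀ t ∈ Ioo (a + T) (a + T), ρ t ≠ 0 := fun t ht =>
    (lt_irrefl t (ht.2.trans ht.1)).elim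
  by_cases h₁ : ∃ b ∈ Ioo a (a + T), ρ b = 0
  swap
  · push Not at h₁
    exact ⟨a + T, a + T, by linarith, le_rfl, le_rfl, h₁, hempty, hempty⟩
  obtain ⟨b, hb, hb0⟩ := h₁
  by_cases h₂ : ∃ c ∈ Ioo b (a + T), ρ c = 0
  · obtain ⟨c, hc, hc0⟩ := h₂
    refine ⟨b, c, hb.1.le, hc.1.le, hc.2.le, ?_, ?_, ?_⟩ <;> intro t ht ht0
    · exact h4 ⟨a, t, b, c, ht.1, ht.2, hc.1, hc.2, ha, ht0, hb0, hc0⟩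
    · exact h4 ⟨a, b, t, c, hb.1, ht.1, ht.2, hc.2, ha, hb0, ht0, hc0⟩
    · exact h4 ⟨a, b, c, t, hb.1, hc.1, ht.1, ht.2, ha, hb0, hc0, ht0⟩
  push Not at h₂
  by_cases h₃ : ∃ c ∈ Ioo a b, ρ c = 0
  · obtain ⟨c, hc, hc0⟩ := h₃
    refine ⟨c, b, hc.1.le, hc.2.le, hb.2.le, ?_, ?_, h₂⟩ <;> intro t ht ht0
    · exact h4 ⟨a, t, c, b, ht.1, ht.2, hc.2, hb.2, ha, ht0, hc0, hb0⟩
    · exact h4 ⟨a, c, t, b, hc.1, ht.1, ht.2, hb.2, ha, hc0, ht0, hb0⟩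
  push Not at h₃
  exact ⟨b, a + T, hb.1.le, hb.2.le, le_rfl, h₃, h₂, hempty⟩

theorem exists_signSplitAt_of_pieces {ρ : ℝ → ℝ} {T a b c : ℝ} (hper : Periodic ρ T)
    (ha : ρ a = 0) (hab : a ≤ b) (hbc : b ≤ c) (hca : c ≤ a + T)
    (hs₁ : (∀ t ∈ Icc a b, 0 ≤ ρ t) ∨ ∀ t ∈ Icc a b, ρ t ≤ 0)
    (hs₂ : (∀ t ∈ Icc b c, 0 ≤ ρ t) ∨ ∀ t ∈ Icc b c, ρ t ≤ 0)
    (hs₃ : (∀ t ∈ Icc c (a + T), 0 ≤ ρ t) ∨ ∀ t ∈ Icc c (a + T), ρ t ≤ 0) :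
    ∃ A B, SignSplitAt ρ T A B ∨ SignSplitAt (-ρ) T A B := by
  wlog h₁ : ∀ t ∈ Icc a b, 0 ≤ ρ t generalizing ρ
  · have hflip : ∀ {s : Set ℝ}, ((∀ t ∈ s, 0 ≤ ρ t) ∨ ∀ t ∈ s, ρ t ≤ 0) →
        (∀ t ∈ s, 0 ≤ (-ρ) t) ∨ ∀ t ∈ s, (-ρ) t ≤ 0 := fun hs =>
      hs.symm.imp (fun h t ht => neg_nonneg.2 (h t ht)) (fun h t ht => neg_nonpos.2 (h t ht))
    obtain ⟨A, B, h⟩ := this (ρ := -ρ) (hper.comp Neg.neg) (by simp [ha]) (hflip hs₁)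
      (hflip hs₂) (hflip hs₃) (fun t ht => neg_nonneg.2 ((hs₁.resolve_left h₁) t ht))
    exact ⟨A, B, by rwa [neg_neg, or_comm] at h⟩
  rcases hs₂ with h₂ | h₂ <;> rcases hs₃ with h₃ | h₃
  · refine ⟨a, a + T, Or.inl ⟨by linarith, le_rfl, ?_, fun t ht => ?_⟩⟩
    · exact forall_mem_Icc_of_forall_mem_Icc (hab.trans hbc) hca
        (forall_mem_Icc_of_forall_mem_Icc hab hbc h₁ h₂) h₃
    · rw [le_antisymm ht.2 ht.1, hper a, ha]
  · exact ⟨a, c, Or.inl ⟨hab.trans hbc, hca, forall_mem_Icc_of_forall_mem_Icc hab hbc h₁ h₂, h₃⟩⟩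
  · -- the nonnegative arcs `[c, a + T]` and `[a, b]` are adjacent across the period boundary
    refine ⟨c - T, b, Or.inl ⟨by linarith, by linarith, ?_, by rwa [sub_add_cancel]⟩⟩
    refine forall_mem_Icc_of_forall_mem_Icc (by linarith) hab (fun t ht => ?_) h₁
    rw [← hper t]
    exact h₃ (t + T) ⟨by linarith [ht.1], by linarith [ht.2]⟩
  · exact ⟨a, b, Or.inl ⟨hab, hbc.trans hca, h₁, forall_mem_Icc_of_forall_mem_Icc hbc hca h₂ h₃⟩⟩

theorem exists_signSplitAt_of_not_hasFourZerosWithin {ρ : ℝ → ℝ} {T a : ℝ} (hcont : Continuous ρ)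
    (hper : Periodic ρ T) (hT : 0 ≤ T) (ha : ρ a = 0) (h4 : ¬HasFourZerosWithin ρ T) :
    ∃ A B, SignSplitAt ρ T A B ∨ SignSplitAt (-ρ) T A B := by
  obtain ⟨b, c, hab, hbc, hca, h₁, h₂, h₃⟩ := exists_zeroFree_pieces hT ha h4
  exact exists_signSplitAt_of_pieces hper ha hab hbc hca
    (nonneg_or_nonpos_of_forall_ne_zero hcont.continuousOn h₁)
    (nonneg_or_nonpos_of_forall_ne_zero hcont.continuousOn h₂)
    (nonneg_or_nonpos_of_forall_ne_zero hcont.continuousOn h₃)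

theorem stmt_14_general (r : ℝ) (hr : 0 < r) (ρ : ℝ → ℝ)
    (hcont : Continuous ρ) (hper : Function.Periodic ρ (2 * π * r))
    (h0 : ∫ t in (0:ℝ)..(2 * π * r), ρ t = 0)
    (hc : ∫ t in (0:ℝ)..(2 * π * r), ρ t * cos (t / r) = 0)
    (hs : ∫ t in (0:ℝ)..(2 * π * r), ρ t * sin (t / r) = 0)
    (hne : ∃ t, ρ t ≠ 0) :
    ∃ a b c d : ℝ, a ∈ Set.Ico 0 (2 * π * r) ∧ b ∈ Set.Ico 0 (2 * π * r) ∧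
      c ∈ Set.Ico 0 (2 * π * r) ∧ d ∈ Set.Ico 0 (2 * π * r) ∧
      a ≠ b ∧ a ≠ c ∧ a ≠ d ∧ b ≠ c ∧ b ≠ d ∧ c ≠ d ∧
      ρ a = 0 ∧ ρ b = 0 ∧ ρ c = 0 ∧ ρ d = 0 := by
  have hT : 0 < 2 * π * r := by positivity
  refine HasFourZerosWithin.exists_mem_Ico hT hper (by_contra fun h4 => ?_)
  have horth : OrthogonalToFirstHarmonics r ρ := ⟨h0, hc, hs⟩
  obtain ⟨a, -, ha⟩ := exists_zero_of_intervalIntegral_eq_zero hT.ne hcont.continuousOn h0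
  obtain ⟨t₀, ht₀⟩ := hne
  obtain ⟨A, B, hsplit | hsplit⟩ :=
    exists_signSplitAt_of_not_hasFourZerosWithin hcont hper hT.le ha h4
  · exact ht₀ (eq_zero_of_signSplitAt hr hcont hper horth hsplit t₀)
  · exact ht₀ (neg_eq_zero.1
      (eq_zero_of_signSplitAt hr hcont.neg (hper.comp Neg.neg) horth.neg hsplit t₀))

/-- A nonzero continuous `2πr`-periodic function whose Fourier expansion has no constant
term and no first harmonics has at least four zeros in `[0, 2πr)`. -/
theorem stmt_14 (r : ℝ) (hr : 0 < r) (hr1 : r < 1) (ρ : ℝ → ℝ)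
    (hcont : Continuous ρ) (hper : Function.Periodic ρ (2 * π * r))
    (h0 : ∫ t in (0:ℝ)..(2 * π * r), ρ t = 0)
    (hc : ∫ t in (0:ℝ)..(2 * π * r), ρ t * cos (t / r) = 0)
    (hs : ∫ t in (0:ℝ)..(2 * π * r), ρ t * sin (t / r) = 0)
    (hne : ∃ t, ρ t ≠ 0) :
    ∃ a b c d : ℝ, a ∈ Set.Ico 0 (2 * π * r) ∧ b ∈ Set.Ico 0 (2 * π * r) ∧
      c ∈ Set.Ico 0 (2 * π * r) ∧ d ∈ Set.Ico 0 (2 * π * r) ∧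
      a ≠ b ∧ a ≠ c ∧ a ≠ d ∧ b ≠ c ∧ b ≠ d ∧ c ≠ d ∧
      ρ a = 0 ∧ ρ b = 0 ∧ ρ c = 0 ∧ ρ d = 0 :=
  stmt_14_general r hr ρ hcont hper h0 hc hs hne
end

section
/- For integer k ≥ 2 and 0 < r < 1, the curve Γ(t) = ( r(sin((k-1)t)/(k-1) + sin((k+1)t)/(k+1)), r(cos((k-1)t)/(k-1) - cos((k+1)t)/(k+1)), 2√(1-r²) sin(kt)/k ) lies on the hyperboloid ((k²-1)/(4r²))(x² + y²) - (k²/(4(1-r²))) z² = 1/(k²-1), and satisfies |z(t)| ≤ 2√(1-r²)/k for all t. -/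
/-!
Expanding the squares, `x² + y² = r² (1/(k-1)² + 1/(k+1)² - 2 cos (2kt)/(k²-1))`, and
`cos 2kt = 1 - 2 sin² kt` rewrites this as `4r²/(k²-1) · (1/(k²-1) + sin² kt)`. The `z²` term of
the hyperboloid contributes exactly `sin² kt`, which cancels; the bound on `|z|` is `|sin| ≤ 1`.
-/

open Real

lemma sq_sin_div_add_sin_div_add_sq_cos_div_sub_cos_div (a b t : ℝ) :
    (sin (a * t) / a + sin (b * t) / b) ^ 2 + (cos (a * t) / a - cos (b * t) / b) ^ 2
      = 1 / a ^ 2 + 1 / b ^ 2 - 2 * cos ((a + b) * t) / (a * b) := by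
  rw [add_mul, cos_add]
  simp only [div_eq_mul_inv, mul_inv]
  linear_combination (a⁻¹ ^ 2) * sin_sq_add_cos_sq (a * t) + (b⁻¹ ^ 2) * sin_sq_add_cos_sq (b * t)

lemma sq_add_sq_hypocycloid {k : ℝ} (hk₁ : k - 1 ≠ 0) (hk₂ : k + 1 ≠ 0) (r t : ℝ) :
    (r * (sin ((k - 1) * t) / (k - 1) + sin ((k + 1) * t) / (k + 1))) ^ 2
        + (r * (cos ((k - 1) * t) / (k - 1) - cos ((k + 1) * t) / (k + 1))) ^ 2
      = 4 * r ^ 2 / (k ^ 2 - 1) * (1 / (k ^ 2 - 1) + sin (k * t) ^ 2) := by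
  have hk : k ^ 2 - 1 ≠ 0 := by
    rw [show k ^ 2 - 1 = (k - 1) * (k + 1) by ring]
    exact mul_ne_zero hk₁ hk₂
  rw [mul_pow, mul_pow, ← mul_add, sq_sin_div_add_sin_div_add_sq_cos_div_sub_cos_div,
    show (k - 1 + (k + 1)) * t = 2 * (k * t) by ring, cos_two_mul, cos_sq']
  field_simp
  ring

lemma div_mul_sq_two_mul_sqrt_mul_div {c k : ℝ} (hc : 0 < c) (hk : k ≠ 0) (u : ℝ) :
    k ^ 2 / (4 * c) * (2 * √c * u / k) ^ 2 = u ^ 2 := by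
  rw [div_pow, mul_pow, mul_pow, sq_sqrt hc.le]
  field_simp
  ring

lemma abs_mul_sin_div_le {a k : ℝ} (ha : 0 ≤ a) (hk : 0 < k) (x : ℝ) :
    |a * sin x / k| ≤ a / k := by
  rw [abs_div, abs_mul, abs_of_nonneg ha, abs_of_pos hk]
  gcongr
  exact mul_le_of_le_one_right ha (abs_sin_le_one x)

/-- The spacial hypocycloid with parameters `k ≥ 2`, `0 < r < 1` lies on the hyperboloid
`((k²-1)/(4r²))(x² + y²) - (k²/(4(1-r²))) z² = 1/(k²-1)` and between the planes
`z = ± 2√(1-r²)/k`. -/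
theorem stmt_16 (k : ℕ) (hk : 2 ≤ k) (r : ℝ) (hr : 0 < r) (hr1 : r < 1) (t : ℝ) :
    (((k:ℝ) ^ 2 - 1) / (4 * r ^ 2)) *
        ((r * (sin (((k:ℝ) - 1) * t) / ((k:ℝ) - 1) + sin (((k:ℝ) + 1) * t) / ((k:ℝ) + 1))) ^ 2
          + (r * (cos (((k:ℝ) - 1) * t) / ((k:ℝ) - 1) - cos (((k:ℝ) + 1) * t) / ((k:ℝ) + 1))) ^ 2)
      - ((k:ℝ) ^ 2 / (4 * (1 - r ^ 2))) * (2 * Real.sqrt (1 - r ^ 2) * sin ((k:ℝ) * t) / (k:ℝ)) ^ 2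
      = 1 / ((k:ℝ) ^ 2 - 1) ∧
    |2 * Real.sqrt (1 - r ^ 2) * sin ((k:ℝ) * t) / (k:ℝ)| ≤ 2 * Real.sqrt (1 - r ^ 2) / (k:ℝ) := by
  have hk2 : (2 : ℝ) ≤ k := by exact_mod_cast hk
  have hk₁ : (k : ℝ) - 1 ≠ 0 := by linarith
  have hk₂ : (k : ℝ) + 1 ≠ 0 := by linarith
  have hksq : (k : ℝ) ^ 2 - 1 ≠ 0 := by nlinarith
  have hr2 : 0 < 1 - r ^ 2 := by nlinarith
  refine ⟨?_, abs_mul_sin_div_le (by positivity) (by positivity) _⟩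
  rw [sq_add_sq_hypocycloid hk₁ hk₂, div_mul_sq_two_mul_sqrt_mul_div hr2 (by positivity)]
  field_simp
  ring
end
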